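/- Let f be a polynomial in n variables of degree at most D, ℓ ∈ ℕ, and x ∈ ℝⁿ. Then the ℓ-th derivative tensor of f at x satisfies ‖(1/ℓ!)·D^ℓ_x f‖_{∞,∞} ≤ binomial(D,ℓ)·‖f‖₁·max{1, ‖x‖_∞}^{D−ℓ}, where ‖A‖_{∞,∞} denotes the supremum of |A[v₁,…,v_ℓ]| over vectors vᵢ with ‖vᵢ‖_∞ ≤ 1. -/

import Mathlib

/-!
Differentiation lowers the degree by one, and `∑ i, ‖∂ᵢ f‖₁ ≤ deg f · ‖f‖₁` because `∂ᵢ`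
multiplies the coefficient of `x^α` by `αᵢ`. Since `D^{ℓ+1} f` is `D^ℓ` of the gradient
`∑ i, ∂ᵢ f • xᵢ*` and each coordinate functional has norm at most `1` for the sup norm, induction
on `ℓ` starting from `|g x| ≤ ‖g‖₁ · max 1 ‖x‖ ^ deg g` bounds `‖D^ℓ_x f‖` by
`D (D - 1) ⋯ (D - ℓ + 1) · ‖f‖₁ · max 1 ‖x‖ ^ (D - ℓ)`, and `D (D - 1) ⋯ (D - ℓ + 1) = ℓ! · choose D ℓ`.
With the sup norm on `Fin n → ℝ`, the operator norm of `iteratedFDeriv` is `‖·‖_{∞,∞}`.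
-/

open MvPolynomial

noncomputable def norm1 {n : ℕ} (f : MvPolynomial (Fin n) ℝ) : ℝ :=
  ∑ α ∈ f.support, |f.coeff α|

section PDeriv

variable {σ R : Type*} [CommSemiring R]

theorem pderiv_eq_sum_monomial (f : MvPolynomial σ R) (i : σ) :
    pderiv i f = ∑ α ∈ f.support, monomial (α - Finsupp.single i 1) (coeff α f * α i) := by
  conv_lhs => rw [f.as_sum, map_sum]
  exact Finset.sum_congr rfl fun α _ => pderiv_monomial

theorem totalDegree_pderiv_le (f : MvPolynomial σ R) (i : σ) :
    (pderiv i f).totalDegree ≤ f.totalDegree - 1 := by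
  rw [pderiv_eq_sum_monomial]
  refine totalDegree_finsetSum_le fun α hα => ?_
  rcases Nat.eq_zero_or_pos (α i) with h0 | hpos
  · simp [h0]
  have hα_split : α - Finsupp.single i 1 + Finsupp.single i 1 = α :=
    tsub_add_cancel_of_le (Finsupp.single_le_iff.2 hpos)
  have hdeg : (α - Finsupp.single i 1).degree + 1 = α.degree := by
    conv_rhs => rw [← hα_split, map_add, Finsupp.degree_single]
  have hle : α.degree ≤ f.totalDegree := le_totalDegree hα
  exact (totalDegree_monomial_le _ _).trans (by change (α - Finsupp.single i 1).degree ≤ _; omega)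

end PDeriv

section Norm1

variable {n : ℕ}

theorem norm1_nonneg (f : MvPolynomial (Fin n) ℝ) : 0 ≤ norm1 f :=
  Finset.sum_nonneg fun _ _ => abs_nonneg _

theorem norm1_eq_sum_of_support_subset (f : MvPolynomial (Fin n) ℝ) {s : Finset (Fin n →₀ ℕ)}
    (hs : f.support ⊆ s) : norm1 f = ∑ α ∈ s, |f.coeff α| :=
  Finset.sum_subset hs fun α _ hα => by simp [notMem_support_iff.1 hα]

theorem norm1_add_le (f g : MvPolynomial (Fin n) ℝ) : norm1 (f + g) ≤ norm1 f + norm1 g := by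
  classical
  rw [norm1_eq_sum_of_support_subset (f + g) support_add,
    norm1_eq_sum_of_support_subset f Finset.subset_union_left,
    norm1_eq_sum_of_support_subset g Finset.subset_union_right, ← Finset.sum_add_distrib]
  exact Finset.sum_le_sum fun α _ => by simpa only [coeff_add] using abs_add_le _ _

theorem norm1_sum_le {ι : Type*} (s : Finset ι) (g : ι → MvPolynomial (Fin n) ℝ) :
    norm1 (∑ i ∈ s, g i) ≤ ∑ i ∈ s, norm1 (g i) :=
  Finset.le_sum_of_subadditive norm1 (by simp [norm1]) norm1_add_le s g

theorem norm1_monomial (β : Fin n →₀ ℕ) (c : ℝ) : norm1 (monomial β c) = |c| := by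
  classical
  rcases eq_or_ne c 0 with rfl | hc
  · simp [norm1]
  · simp [norm1, support_monomial, hc]

theorem sum_norm1_pderiv_le (f : MvPolynomial (Fin n) ℝ) :
    ∑ i, norm1 (pderiv i f) ≤ f.totalDegree * norm1 f := by
  calc ∑ i, norm1 (pderiv i f) ≤ ∑ i, ∑ α ∈ f.support, |coeff α f| * α i := by
        refine Finset.sum_le_sum fun i _ => ?_
        rw [pderiv_eq_sum_monomial]
        refine (norm1_sum_le _ _).trans_eq (Finset.sum_congr rfl fun α _ => ?_)
        rw [norm1_monomial, abs_mul, Nat.abs_cast]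
    _ = ∑ α ∈ f.support, |coeff α f| * (α.degree : ℝ) := by
        rw [Finset.sum_comm]
        simp_rw [← Finset.mul_sum, Finsupp.degree_eq_sum, Nat.cast_sum]
    _ ≤ ∑ α ∈ f.support, |coeff α f| * f.totalDegree :=
        Finset.sum_le_sum fun α hα => mul_le_mul_of_nonneg_left
          (mod_cast le_totalDegree hα) (abs_nonneg _)
    _ = f.totalDegree * norm1 f := by rw [← Finset.sum_mul, mul_comm, norm1]

theorem abs_prod_pow_le (x : Fin n → ℝ) (α : Fin n →₀ ℕ) :
    |∏ i ∈ α.support, x i ^ α i| ≤ max 1 ‖x‖ ^ α.degree := by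
  rw [Finset.abs_prod, Finsupp.degree_apply, ← Finset.prod_pow_eq_pow_sum]
  refine Finset.prod_le_prod (fun _ _ => abs_nonneg _) fun i _ => ?_
  rw [abs_pow]
  exact pow_le_pow_left₀ (abs_nonneg _) ((norm_le_pi_norm x i).trans (le_max_right _ _)) _

theorem abs_eval_le_norm1_mul (f : MvPolynomial (Fin n) ℝ) {D : ℕ} (hD : f.totalDegree ≤ D)
    (x : Fin n → ℝ) : |eval x f| ≤ norm1 f * max 1 ‖x‖ ^ D := by
  rw [eval_eq, norm1, Finset.sum_mul]
  refine (Finset.abs_sum_le_sum_abs _ _).trans (Finset.sum_le_sum fun α hα => ?_)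
  rw [abs_mul]
  refine mul_le_mul_of_nonneg_left ((abs_prod_pow_le x α).trans ?_) (abs_nonneg _)
  exact pow_le_pow_right₀ (le_max_left _ _) ((le_totalDegree hα).trans hD)

end Norm1

section Calculus

variable {𝕜 : Type*} [NontriviallyNormedField 𝕜]

theorem norm_iteratedFDeriv_smul_const_le {E F : Type*} [NormedAddCommGroup E]
    [NormedSpace 𝕜 E] [NormedAddCommGroup F] [NormedSpace 𝕜 F] {g : E → 𝕜} {x : E} {ℓ : ℕ}
    (hg : ContDiffAt 𝕜 ℓ g x) (c : F) :
    ‖iteratedFDeriv 𝕜 ℓ (fun y => g y • c) x‖ ≤ ‖c‖ * ‖iteratedFDeriv 𝕜 ℓ g x‖ := by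
  have h := (ContinuousLinearMap.toSpanSingleton 𝕜 c).norm_iteratedFDeriv_comp_left hg le_rfl
  rwa [ContinuousLinearMap.norm_toSpanSingleton] at h

variable {σ : Type*} [Fintype σ]

theorem contDiff_eval [CompleteSpace 𝕜] (f : MvPolynomial σ 𝕜) {m : WithTop ℕ∞} :
    ContDiff 𝕜 m (fun y : σ → 𝕜 => eval y f) :=
  contDiff_iff_contDiffAt.2 fun x => (AnalyticOnNhd.eval_mvPolynomial f x trivial).contDiffAt

theorem hasFDerivAt_eval (f : MvPolynomial σ 𝕜) (x : σ → 𝕜) :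
    HasFDerivAt (fun y : σ → 𝕜 => eval y f)
      (∑ i, eval x (pderiv i f) • (ContinuousLinearMap.proj i : (σ → 𝕜) →L[𝕜] 𝕜)) x := by
  classical
  induction f using MvPolynomial.induction_on with
  | C a =>
    simp only [eval_C]
    refine (hasFDerivAt_const (𝕜 := 𝕜) a x).congr_fderiv ?_
    ext v
    simp
  | add p q hp hq =>
    simp only [eval_add]
    refine (hp.fun_add hq).congr_fderiv ?_
    ext v
    simp [add_mul, Finset.sum_add_distrib]
  | mul_X p i hp =>
    simp only [eval_mul, eval_X]
    refine (hp.mul (hasFDerivAt_apply i x)).congr_fderiv ?_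
    ext v
    simp [Pi.single_apply, apply_ite (eval x), add_mul, mul_assoc, Finset.sum_add_distrib,
      Finset.mul_sum]

theorem norm_proj_le {ι : Type*} [Fintype ι] {φ : ι → Type*} [∀ i, NormedAddCommGroup (φ i)]
    [∀ i, NormedSpace 𝕜 (φ i)] (i : ι) :
    ‖(ContinuousLinearMap.proj i : ((j : ι) → φ j) →L[𝕜] φ i)‖ ≤ 1 :=
  ContinuousLinearMap.opNorm_le_bound _ zero_le_one fun y => by simpa using norm_le_pi_norm y i

theorem norm_iteratedFDeriv_succ_eval_le [CompleteSpace 𝕜] (f : MvPolynomial σ 𝕜) (ℓ : ℕ)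
    (x : σ → 𝕜) :
    ‖iteratedFDeriv 𝕜 (ℓ + 1) (fun y : σ → 𝕜 => eval y f) x‖ ≤
      ∑ i, ‖iteratedFDeriv 𝕜 ℓ (fun y : σ → 𝕜 => eval y (pderiv i f)) x‖ := by
  have hfderiv : fderiv 𝕜 (fun y : σ → 𝕜 => eval y f) =
      fun y => ∑ i, eval y (pderiv i f) • (ContinuousLinearMap.proj i : (σ → 𝕜) →L[𝕜] 𝕜) :=
    funext fun y => (hasFDerivAt_eval f y).fderiv
  have hsmooth (i : σ) : ContDiff 𝕜 ℓ
      (fun y => eval y (pderiv i f) • (ContinuousLinearMap.proj i : (σ → 𝕜) →L[𝕜] 𝕜)) :=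
    (contDiff_eval _).fun_smul contDiff_const
  rw [← norm_iteratedFDeriv_fderiv, hfderiv,
    iteratedFDeriv_fun_sum_apply fun i _ => (hsmooth i).contDiffAt]
  refine (norm_sum_le _ _).trans (Finset.sum_le_sum fun i _ => ?_)
  refine (norm_iteratedFDeriv_smul_const_le (contDiff_eval _).contDiffAt _).trans ?_
  exact mul_le_of_le_one_left (norm_nonneg _) (norm_proj_le i)

end Calculus

theorem Nat.descFactorial_succ_eq_mul_sub_one (D ℓ : ℕ) :
    D.descFactorial (ℓ + 1) = D * (D - 1).descFactorial ℓ := by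
  cases D with
  | zero => simp
  | succ D => exact Nat.succ_descFactorial_succ D ℓ

theorem norm_iteratedFDeriv_eval_le {n : ℕ} (ℓ : ℕ) {D : ℕ} (f : MvPolynomial (Fin n) ℝ)
    (hD : f.totalDegree ≤ D) (x : Fin n → ℝ) :
    ‖iteratedFDeriv ℝ ℓ (fun y : Fin n → ℝ => eval y f) x‖ ≤
      D.descFactorial ℓ * norm1 f * max 1 ‖x‖ ^ (D - ℓ) := by
  induction ℓ generalizing D f with
  | zero => simpa using abs_eval_le_norm1_mul f hD x
  | succ ℓ ih =>
    have hdeg (i : Fin n) : (pderiv i f).totalDegree ≤ D - 1 :=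
      (totalDegree_pderiv_le f i).trans (Nat.sub_le_sub_right hD 1)
    have hsum : ∑ i, norm1 (pderiv i f) ≤ D * norm1 f :=
      (sum_norm1_pderiv_le f).trans
        (mul_le_mul_of_nonneg_right (mod_cast hD) (norm1_nonneg f))
    calc ‖iteratedFDeriv ℝ (ℓ + 1) (fun y : Fin n → ℝ => eval y f) x‖
        ≤ ∑ i, ‖iteratedFDeriv ℝ ℓ (fun y : Fin n → ℝ => eval y (pderiv i f)) x‖ :=
          norm_iteratedFDeriv_succ_eval_le f ℓ x
      _ ≤ ∑ i, (D - 1).descFactorial ℓ * norm1 (pderiv i f) * max 1 ‖x‖ ^ (D - 1 - ℓ) :=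
          Finset.sum_le_sum fun i _ => ih (pderiv i f) (hdeg i)
      _ = (D - 1).descFactorial ℓ * max 1 ‖x‖ ^ (D - 1 - ℓ) * ∑ i, norm1 (pderiv i f) := by
          rw [Finset.mul_sum]
          exact Finset.sum_congr rfl fun i _ => by ring
      _ ≤ (D - 1).descFactorial ℓ * max 1 ‖x‖ ^ (D - 1 - ℓ) * (D * norm1 f) := by gcongr
      _ = D.descFactorial (ℓ + 1) * norm1 f * max 1 ‖x‖ ^ (D - (ℓ + 1)) := by
          rw [Nat.descFactorial_succ_eq_mul_sub_one, Nat.sub_sub, add_comm 1 ℓ]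
          push_cast
          ring

/-- If `f` has degree at most `D`, then the `ℓ`-th derivative tensor of `f` at
`x` satisfies `‖(1/ℓ!)·D^ℓ_x f‖_{∞,∞} ≤ binom(D,ℓ)·‖f‖₁·max{1,‖x‖_∞}^(D−ℓ)`.
The domain `Fin n → ℝ` carries the sup-norm, so the norm of the iterated
derivative (a continuous multilinear map) is exactly the `(∞,∞)`-spectral
norm. -/
theorem norm1_iteratedFDeriv_le {n : ℕ} (D ℓ : ℕ) (f : MvPolynomial (Fin n) ℝ)
    (hD : f.totalDegree ≤ D) (x : Fin n → ℝ) :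
    (ℓ.factorial : ℝ)⁻¹ *
        ‖iteratedFDeriv ℝ ℓ (fun y : Fin n → ℝ => MvPolynomial.eval y f) x‖ ≤
      (D.choose ℓ : ℝ) * norm1 f * max 1 ‖x‖ ^ (D - ℓ) := by
  rw [inv_mul_le_iff₀ (by positivity)]
  refine (norm_iteratedFDeriv_eval_le ℓ f hD x).trans_eq ?_
  rw [Nat.descFactorial_eq_factorial_mul_choose]
  push_cast
  ring
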